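/- arXiv:math/0609030 — 2 statements merged into one kernel-verified Lean document; each statement's English description precedes it below -/
import Mathlib

section
/- Let f_ε be the test function on a closed Riemannian 4-manifold defined by f_ε(x) = c + (Λ + B d_g(x,x₀)² - 4 log(1 + λ (d_g(x,x₀)/ε)²))/(64π²c) + S(x)/c for d_g(x,x₀) ≤ Lε and f_ε = G/c otherwise, with λ = π/√6, B = -4/(L²ε²(1+λL²)), Λ = -64π²c² - BL²ε² - 8log(Lε) + 4log(1+λL²). Then in the Euclidean model, ∫_{B^{Lε}(0)} |Δ₀ f̃_ε|² dx = (12 + λL²(30 + λL²(21 + λL²)) + 6(1+λL²)³ log(1+λL²)) / (96 c² (1+λL²)³ π²). -/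
open MeasureTheory Real

/-- The Euclidean Laplacian `Δ₀` on `ℝ⁴`, as the trace of the second derivative. -/
noncomputable def laplacian (f : EuclideanSpace ℝ (Fin 4) → ℝ)
    (x : EuclideanSpace ℝ (Fin 4)) : ℝ :=
  ∑ i : Fin 4, iteratedFDeriv ℝ 2 f x ![EuclideanSpace.single i 1, EuclideanSpace.single i 1]

local notation "E4" => EuclideanSpace ℝ (Fin 4)

noncomputable def Jin : E4 →L[ℝ] E4 →L[ℝ] ℝ := innerSL ℝ

@[simp] lemma Jin_apply (x v : E4) : Jin x v = inner ℝ x v := rfl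

lemma normsq_hasFDerivAt (y : E4) :
    HasFDerivAt (fun z : E4 => ‖z‖ ^ 2) ((2 : ℝ) • Jin y) y := by
  have h := (hasFDerivAt_id y).inner ℝ (hasFDerivAt_id y)
  have he : (fun t : E4 => (inner ℝ (id t) (id t) : ℝ)) = fun z : E4 => ‖z‖ ^ 2 := by
    funext z; simp only [id]; exact real_inner_self_eq_norm_sq z
  rw [he] at h
  have heq : (fderivInnerCLM ℝ (id y, id y)).comp
      ((ContinuousLinearMap.id ℝ E4).prod (ContinuousLinearMap.id ℝ E4)) = (2 : ℝ) • Jin y := by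
    ext v
    simp [fderivInnerCLM_apply, two_smul, real_inner_comm]
  rw [heq] at h
  exact h

lemma lap_radial (g g1 g2 : ℝ → ℝ)
    (h1 : ∀ s : ℝ, 0 ≤ s → HasDerivAt g (g1 s) s)
    (h2 : ∀ s : ℝ, 0 ≤ s → HasDerivAt g1 (g2 s) s)
    (x : E4) :
    laplacian (fun y => g (‖y‖ ^ 2)) x = 8 * g1 (‖x‖ ^ 2) + 4 * ‖x‖ ^ 2 * g2 (‖x‖ ^ 2) := by
  have hfd : ∀ y : E4, HasFDerivAt (fun z => g (‖z‖ ^ 2))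
      ((2 * g1 (‖y‖ ^ 2)) • Jin y) y := by
    intro y
    have h := (h1 (‖y‖ ^ 2) (by positivity)).comp_hasFDerivAt y (normsq_hasFDerivAt y)
    have he : (2 * g1 (‖y‖ ^ 2)) • Jin y = g1 (‖y‖ ^ 2) • ((2:ℝ) • Jin y) := by
      rw [smul_smul, mul_comm]
    rw [he]; exact h
  have hD : fderiv ℝ (fun z : E4 => g (‖z‖ ^ 2)) =
      fun y => (2 * g1 (‖y‖ ^ 2)) • Jin y := funext fun y => (hfd y).fderiv
  have hc : HasFDerivAt (fun y : E4 => 2 * g1 (‖y‖ ^ 2))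
      ((2 * g2 (‖x‖ ^ 2)) • ((2 : ℝ) • Jin x)) x := by
    have hd : HasDerivAt (fun s => 2 * g1 s) (2 * g2 (‖x‖ ^ 2)) (‖x‖ ^ 2) :=
      (h2 (‖x‖ ^ 2) (by positivity)).const_mul 2
    have := hd.comp_hasFDerivAt x (normsq_hasFDerivAt x); exact this
  have hsm : HasFDerivAt (fun y : E4 => (2 * g1 (‖y‖ ^ 2)) • Jin y)
      ((2 * g1 (‖x‖ ^ 2)) • Jin +
        ((2 * g2 (‖x‖ ^ 2)) • ((2 : ℝ) • Jin x)).smulRight (Jin x)) x :=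
    hc.smul Jin.hasFDerivAt
  have h2nd : fderiv ℝ (fderiv ℝ (fun z : E4 => g (‖z‖ ^ 2))) x =
      (2 * g1 (‖x‖ ^ 2)) • Jin +
        ((2 * g2 (‖x‖ ^ 2)) • ((2 : ℝ) • Jin x)).smulRight (Jin x) := by
    rw [hD]; exact hsm.fderiv
  unfold laplacian
  have hterm : ∀ i : Fin 4,
      iteratedFDeriv ℝ 2 (fun z : E4 => g (‖z‖ ^ 2)) x
        ![EuclideanSpace.single i 1, EuclideanSpace.single i 1] =
      2 * g1 (‖x‖ ^ 2) + 4 * g2 (‖x‖ ^ 2) * (x i) ^ 2 := by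
    intro i
    rw [iteratedFDeriv_two_apply, h2nd]
    simp [ContinuousLinearMap.smulRight_apply, EuclideanSpace.inner_single_right,
      EuclideanSpace.inner_single_left, real_inner_comm]
    ring
  rw [Finset.sum_congr rfl fun i _ => hterm i]
  have hns : ‖x‖ ^ 2 = ∑ i : Fin 4, (x i) ^ 2 := by
    rw [← real_inner_self_eq_norm_sq]
    rw [PiLp.inner_apply]; simp [sq]
  rw [Finset.sum_add_distrib]
  simp only [Finset.sum_const, Finset.card_univ, Fintype.card_fin, nsmul_eq_mul,
    ← Finset.mul_sum]
  rw [← hns]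
  ring

lemma vol_ball_one : (volume (Metric.ball (0:E4) 1)).toReal = π^2/2 := by
  rw [EuclideanSpace.volume_ball]
  have h1 : (Fintype.card (Fin 4)) = 4 := by simp
  rw [h1]
  have h2 : Real.sqrt π ^ 4 = π ^ 2 := by
    rw [show (4:ℕ) = 2*2 from rfl, pow_mul, Real.sq_sqrt Real.pi_nonneg]
  have h3 : Real.Gamma (((4:ℕ):ℝ)/2 + 1) = 2 := by
    rw [show (((4:ℕ):ℝ))/2+1 = (2:ℕ)+1 by norm_num, Real.Gamma_nat_eq_factorial]
    norm_num
  rw [h2, h3]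
  simp [ENNReal.ofReal_one, ENNReal.toReal_ofReal (show (0:ℝ) ≤ π ^ 2 / 2 by positivity)]

lemma polar_reduce (R : ℝ) (H : ℝ → ℝ) :
    (∫ x in Metric.ball (0:E4) R, H ‖x‖) =
      4 * (π^2/2) * ∫ y in Set.Ioo (0:ℝ) R, y^3 * H y := by
  have h1 : (∫ x in Metric.ball (0:E4) R, H ‖x‖) =
      ∫ x : E4, Set.indicator (Set.Iio R) H ‖x‖ := by
    rw [← integral_indicator measurableSet_ball]
    congr 1
    funext x
    by_cases hx : ‖x‖ < R
    · rw [Set.indicator_of_mem (by simpa [Metric.mem_ball] using hx),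
        Set.indicator_of_mem (by simpa using hx)]
    · rw [Set.indicator_of_notMem (by simpa [Metric.mem_ball] using hx),
        Set.indicator_of_notMem (by simpa using hx)]
  rw [h1, MeasureTheory.integral_fun_norm_addHaar volume (Set.indicator (Set.Iio R) H)]
  rw [finrank_euclideanSpace_fin]
  rw [measureReal_def, vol_ball_one]
  have h2 : ∀ y : ℝ, y ^ (4-1) • Set.indicator (Set.Iio R) H y =
      Set.indicator (Set.Iio R) (fun y => y^3 * H y) y := by
    intro y
    by_cases hy : y < R
    · rw [Set.indicator_of_mem (by simpa using hy), Set.indicator_of_mem (by simpa using hy)]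
      simp
    · rw [Set.indicator_of_notMem (by simpa using hy),
        Set.indicator_of_notMem (by simpa using hy)]
      simp
  rw [show (∫ y in Set.Ioi (0:ℝ), y ^ (4-1) • Set.indicator (Set.Iio R) H y) =
      ∫ y in Set.Ioi (0:ℝ), Set.indicator (Set.Iio R) (fun y => y^3 * H y) y from
    integral_congr_ae (Filter.Eventually.of_forall fun y => h2 y)]
  rw [setIntegral_indicator measurableSet_Iio, Set.Ioi_inter_Iio]
  simp [smul_eq_mul]
  ring

noncomputable def Pant (a B K r : ℝ) : ℝ :=
  (16*B^2/K^2)*r^4 - (128*B/K^2)*r^2 - (128*(B+a)/(a*K^2))*(1+a*r^2)⁻¹ +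
    (128/K^2)*Real.log (1+a*r^2) + (64/K^2)*((1+a*r^2)^2)⁻¹ + (128/(3*K^2))*((1+a*r^2)^3)⁻¹

lemma Pant_hasDerivAt (a B K : ℝ) (ha : 0 < a) (hK : K ≠ 0) (r : ℝ) :
    HasDerivAt (Pant a B K)
      (r^3 * (8 * ((B - 4*(a/(1+a*r^2)))/K) + 4*r^2*((4*(a*a/(1+a*r^2)^2))/K))^2) r := by
  have hwpos : 0 < 1 + a*r^2 := by positivity
  have hwne : (1 + a*r^2) ≠ 0 := ne_of_gt hwpos
  have hw : HasDerivAt (fun s : ℝ => 1 + a*s^2) (2*a*r) r := by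
    have := ((hasDerivAt_pow 2 r).const_mul a).const_add 1
    refine this.congr_deriv ?_
    try push_cast
    try ring
  have h4 : HasDerivAt (fun s : ℝ => s^4) ((4:ℝ)*r^3) r := by
    have := hasDerivAt_pow 4 r
    refine this.congr_deriv ?_
    try push_cast
    try ring
  have h2 : HasDerivAt (fun s : ℝ => s^2) ((2:ℝ)*r) r := by
    have := hasDerivAt_pow 2 r
    refine this.congr_deriv ?_
    try push_cast
    try ring
  have hinv : HasDerivAt (fun s : ℝ => (1+a*s^2)⁻¹) (-(2*a*r)/(1+a*r^2)^2) r := hw.inv hwne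
  have hlog : HasDerivAt (fun s : ℝ => Real.log (1+a*s^2)) ((2*a*r)/(1+a*r^2)) r := hw.log hwne
  have hw2 : HasDerivAt (fun s : ℝ => ((1+a*s^2)^2)⁻¹)
      (-((2:ℝ)*(1+a*r^2)^1*(2*a*r))/((1+a*r^2)^2)^2) r := by
    have := (hw.pow 2).inv (pow_ne_zero 2 hwne)
    refine this.congr_deriv ?_
    simp only [Pi.pow_apply]
    try push_cast
    try ring
  have hw3 : HasDerivAt (fun s : ℝ => ((1+a*s^2)^3)⁻¹)
      (-((3:ℝ)*(1+a*r^2)^2*(2*a*r))/((1+a*r^2)^3)^2) r := by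
    have := (hw.pow 3).inv (pow_ne_zero 3 hwne)
    refine this.congr_deriv ?_
    simp only [Pi.pow_apply]
    try push_cast
    try ring
  have hP := (((((h4.const_mul (16*B^2/K^2)).sub (h2.const_mul (128*B/K^2))).sub
      (hinv.const_mul (128*(B+a)/(a*K^2)))).add (hlog.const_mul (128/K^2))).add
      (hw2.const_mul (64/K^2))).add (hw3.const_mul (128/(3*K^2)))
  refine hP.congr_deriv ?_
  have hane : a ≠ 0 := ne_of_gt ha
  field_simp
  ring

lemma oneD (a B K R : ℝ) (ha : 0 < a) (hK : K ≠ 0) (hR : 0 < R) :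
    (∫ y in Set.Ioo (0:ℝ) R,
        y^3 * (8 * ((B - 4*(a/(1+a*y^2)))/K) + 4*y^2*((4*(a*a/(1+a*y^2)^2))/K))^2)
      = Pant a B K R - Pant a B K 0 := by
  have hcont : Continuous (fun y : ℝ =>
      y^3 * (8 * ((B - 4*(a/(1+a*y^2)))/K) + 4*y^2*((4*(a*a/(1+a*y^2)^2))/K))^2) := by
    fun_prop (disch := intros; positivity)
  rw [← MeasureTheory.integral_Ioc_eq_integral_Ioo, ← intervalIntegral.integral_of_le hR.le]
  exact intervalIntegral.integral_eq_sub_of_hasDerivAt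
    (fun r _ => Pant_hasDerivAt a B K ha hK r) (hcont.intervalIntegrable 0 R)

/-- Exact Euclidean energy of the test function: with `λ = π/√6`,
`B = -4/(L²ε²(1+λL²))`, `Λ = -64π²c² - BL²ε² - 8log(Lε) + 4log(1+λL²)`, and
`f̃_ε(x) = c + (Λ + B|x|² - 4 log(1 + λ(|x|/ε)²))/(64π²c)` (the Euclidean model of the
paper's test function), one has
`∫_{B^{Lε}(0)} |Δ₀ f̃_ε|² dx
  = (12 + λL²(30 + λL²(21 + λL²)) + 6(1+λL²)³ log(1+λL²)) / (96 c² (1+λL²)³ π²)`. -/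
theorem stmt_15 (ε c L lam B Λ : ℝ) (hε : 0 < ε) (hc : 0 < c) (hL : 0 < L)
    (hlam : lam = π / Real.sqrt 6)
    (hB : B = -4 / (L ^ 2 * ε ^ 2 * (1 + lam * L ^ 2)))
    (hΛ : Λ = -64 * π ^ 2 * c ^ 2 - B * L ^ 2 * ε ^ 2 - 8 * Real.log (L * ε) +
      4 * Real.log (1 + lam * L ^ 2))
    (f : EuclideanSpace ℝ (Fin 4) → ℝ)
    (hf : ∀ x, f x = c +
      (Λ + B * ‖x‖ ^ 2 - 4 * Real.log (1 + lam * (‖x‖ / ε) ^ 2)) / (64 * π ^ 2 * c)) :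
    (∫ x in Metric.ball (0 : EuclideanSpace ℝ (Fin 4)) (L * ε), (laplacian f x) ^ 2) =
      (12 + lam * L ^ 2 * (30 + lam * L ^ 2 * (21 + lam * L ^ 2)) +
          6 * (1 + lam * L ^ 2) ^ 3 * Real.log (1 + lam * L ^ 2)) /
        (96 * c ^ 2 * (1 + lam * L ^ 2) ^ 3 * π ^ 2) := by
  have hlampos : 0 < lam := by
    rw [hlam]
    positivity
  set a : ℝ := lam / ε ^ 2 with ha_def
  have ha : 0 < a := by positivity
  set K : ℝ := 64 * π ^ 2 * c with hK_def
  have hπ : π ≠ 0 := Real.pi_ne_zero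
  have hK : K ≠ 0 := by
    rw [hK_def]
    positivity
  -- Laplacian of the radial test function
  have hlap : ∀ x : E4, laplacian f x =
      8 * ((B - 4 * (a / (1 + a * ‖x‖ ^ 2))) / K) +
        4 * ‖x‖ ^ 2 * ((4 * (a * a / (1 + a * ‖x‖ ^ 2) ^ 2)) / K) := by
    intro x
    have hfg : f = fun y : E4 => c + (Λ + B * ‖y‖ ^ 2 - 4 * Real.log (1 + a * ‖y‖ ^ 2)) / K := by
      funext y
      rw [hf]
      have : lam * (‖y‖ / ε) ^ 2 = a * ‖y‖ ^ 2 := by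
        rw [ha_def, div_pow]
        field_simp
      rw [this, hK_def]
    rw [hfg]
    exact lap_radial (fun s => c + (Λ + B * s - 4 * Real.log (1 + a * s)) / K)
      (fun s => (B - 4 * (a / (1 + a * s))) / K)
      (fun s => (4 * (a * a / (1 + a * s) ^ 2)) / K)
      (by
        intro s hs
        have hwpos : 0 < 1 + a * s := by positivity
        have hw : HasDerivAt (fun s : ℝ => 1 + a * s) a s := by
          simpa using ((hasDerivAt_id s).const_mul a).const_add 1
        have hlog := hw.log (ne_of_gt hwpos)
        have hmain := ((((hasDerivAt_id s).const_mul B).const_add Λ).sub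
          (hlog.const_mul 4)).div_const K |>.const_add c
        refine hmain.congr_deriv ?_
        try ring)
      (by
        intro s hs
        have hwpos : 0 < 1 + a * s := by positivity
        have hw : HasDerivAt (fun s : ℝ => 1 + a * s) a s := by
          simpa using ((hasDerivAt_id s).const_mul a).const_add 1
        have hdiv := (hasDerivAt_const s a).div hw (ne_of_gt hwpos)
        have hmain := ((hasDerivAt_const s B).sub (hdiv.const_mul 4)).div_const K
        refine hmain.congr_deriv ?_
        field_simp
        try ring)
      x
  have hR : 0 < L * ε := by positivity
  simp only [hlap]
  have hpolar := polar_reduce (L * ε)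
    (fun y => (8 * ((B - 4 * (a / (1 + a * y ^ 2))) / K) +
      4 * y ^ 2 * ((4 * (a * a / (1 + a * y ^ 2) ^ 2)) / K)) ^ 2)
  rw [show (fun x : E4 => (8 * ((B - 4 * (a / (1 + a * ‖x‖ ^ 2))) / K) +
      4 * ‖x‖ ^ 2 * ((4 * (a * a / (1 + a * ‖x‖ ^ 2) ^ 2)) / K)) ^ 2) =
      fun x : E4 => (fun y => (8 * ((B - 4 * (a / (1 + a * y ^ 2))) / K) +
      4 * y ^ 2 * ((4 * (a * a / (1 + a * y ^ 2) ^ 2)) / K)) ^ 2) ‖x‖ from rfl]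
  rw [hpolar]
  have hone := oneD a B K (L * ε) ha hK hR
  rw [hone]
  have hkey : 1 + a * (L * ε) ^ 2 = 1 + lam * L ^ 2 := by
    rw [ha_def]
    field_simp
  have h1t : (0:ℝ) < 1 + lam * L ^ 2 := by positivity
  simp only [Pant, hkey]
  norm_num [Real.log_one]
  rw [hB, hK_def, ha_def]
  have hεne : ε ≠ 0 := ne_of_gt hε
  have hLne : L ≠ 0 := ne_of_gt hL
  have hcne : c ≠ 0 := ne_of_gt hc
  have h1tne : (1 + lam * L ^ 2) ≠ 0 := ne_of_gt h1t
  field_simp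
  ring
end

section
/- If a sequence of nonnegative reals d_k and a real τ satisfy, for every sufficiently small δ > 0, the inequality (32π²/α_k²) log(λ_k/β_k²) ≤ (1/8π²)(d_kτ - 32π²/α_k)² log δ + C(d_k² + d_k + log d_k) + C, where α_k → 32π², d_k → d ∈ (0,∞), and λ_k/β_k² is bounded away from 0, then dτ = 1. -/
/-!
Letting `k → ∞` for a fixed small `δ` turns the hypothesis into
`log c₀ / (32π²) ≤ (dτ - 1)² / (8π²) · log δ + K` with `K` independent of `δ`.
Since `log δ → -∞` as `δ → 0⁺`, the coefficient `(dτ - 1)² / (8π²)` cannot be positive,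
so `dτ = 1`.
-/

open Real Filter Topology

lemma nonpos_of_eventually_le_mul_log_add {a A K : ℝ}
    (h : ∀ᶠ δ in 𝓝[>] 0, a ≤ A * log δ + K) : A ≤ 0 := by
  by_contra! hA
  have hbot : Tendsto (fun δ => A * log δ + K) (𝓝[>] 0) atBot :=
    (tendsto_log_nhdsGT_zero.const_mul_atBot hA).atBot_add tendsto_const_nhds
  obtain ⟨δ, hle, hlt⟩ := (h.and (hbot.eventually_lt_atBot a)).exists
  exact (hle.trans_lt hlt).false

theorem stmt_18_general (d : ℕ → ℝ) (τ dlim : ℝ)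
    (hdlim : Tendsto d atTop (nhds dlim)) (hdlim_pos : 0 < dlim)
    (α : ℕ → ℝ) (hα : Tendsto α atTop (nhds (32 * π ^ 2)))
    (lb : ℕ → ℝ) -- `lb k = λ_k / β_k²`
    (c₀ : ℝ) (hc₀ : 0 < c₀) (hlb : ∀ k, c₀ ≤ lb k)
    (C : ℝ)
    (hineq : ∃ δ₁ > (0:ℝ), ∀ δ, 0 < δ → δ < δ₁ → ∀ k,
      32 * π ^ 2 / (α k) ^ 2 * Real.log (lb k) ≤
        1 / (8 * π ^ 2) * (d k * τ - 32 * π ^ 2 / α k) ^ 2 * Real.log δ +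
          C * ((d k) ^ 2 + d k + Real.log (d k)) + C) :
    dlim * τ = 1 := by
  obtain ⟨δ₁, hδ₁, hineq⟩ := hineq
  have hα₀ : (32 * π ^ 2 : ℝ) ≠ 0 := by positivity
  have hratio : Tendsto (fun k => 32 * π ^ 2 / α k) atTop (𝓝 1) := by
    have h := (tendsto_const_nhds (x := 32 * π ^ 2) (f := atTop)).div hα hα₀
    rwa [div_self hα₀] at h
  have hlimit : ∀ᶠ δ in 𝓝[>] 0,
      32 * π ^ 2 / (32 * π ^ 2) ^ 2 * log c₀ ≤
        1 / (8 * π ^ 2) * (dlim * τ - 1) ^ 2 * log δ +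
          C * (dlim ^ 2 + dlim + log dlim) + C := by
    filter_upwards [Ioo_mem_nhdsGT hδ₁] with δ ⟨hδ, hδlt⟩
    refine le_of_tendsto_of_tendsto'
      ((tendsto_const_nhds.div (hα.pow 2) (pow_ne_zero 2 hα₀)).mul_const _)
      ((((tendsto_const_nhds.mul (((hdlim.mul_const τ).sub hratio).pow 2)).mul_const _).add
        (tendsto_const_nhds.mul (((hdlim.pow 2).add hdlim).add (hdlim.log hdlim_pos.ne')))).add
          tendsto_const_nhds) fun k => ?_
    exact (hineq δ hδ hδlt k).trans'
      (mul_le_mul_of_nonneg_left (log_le_log hc₀ (hlb k))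
        (div_nonneg (by positivity) (sq_nonneg _)))
  have hcoef : 1 / (8 * π ^ 2) * (dlim * τ - 1) ^ 2 ≤ 0 :=
    nonpos_of_eventually_le_mul_log_add (hlimit.mono fun _ h => h.trans_eq (add_assoc _ _ _))
  have hsq : (dlim * τ - 1) ^ 2 ≤ 0 := nonpos_of_mul_nonpos_right hcoef (by positivity)
  exact sub_eq_zero.mp ((pow_eq_zero_iff two_ne_zero).mp (hsq.antisymm (sq_nonneg _)))

/-- Abstract version of the capacity conclusion: if nonnegative reals `d_k → d ∈ (0,∞)`,
`α_k → 32π²`, `λ_k/β_k²` is bounded below away from `0`, and for every sufficiently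
small `δ > 0` and every `k`,
`(32π²/α_k²) log(λ_k/β_k²) ≤ (1/8π²)(d_kτ - 32π²/α_k)² log δ + C(d_k² + d_k + log d_k) + C`,
then `dτ = 1`. -/
theorem stmt_18 (d : ℕ → ℝ) (hd : ∀ k, 0 ≤ d k) (τ dlim : ℝ)
    (hdlim : Tendsto d atTop (nhds dlim)) (hdlim_pos : 0 < dlim)
    (α : ℕ → ℝ) (hα : Tendsto α atTop (nhds (32 * π ^ 2)))
    (lb : ℕ → ℝ) -- `lb k = λ_k / β_k²`
    (c₀ : ℝ) (hc₀ : 0 < c₀) (hlb : ∀ k, c₀ ≤ lb k)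
    (C : ℝ)
    (hineq : ∃ δ₁ > (0:ℝ), ∀ δ, 0 < δ → δ < δ₁ → ∀ k,
      32 * π ^ 2 / (α k) ^ 2 * Real.log (lb k) ≤
        1 / (8 * π ^ 2) * (d k * τ - 32 * π ^ 2 / α k) ^ 2 * Real.log δ +
          C * ((d k) ^ 2 + d k + Real.log (d k)) + C) :
    dlim * τ = 1 :=
  stmt_18_general d τ dlim hdlim hdlim_pos α hα lb c₀ hc₀ hlb C hineq
end
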